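/- Let 1 ≤ c ≤ n and m ≥ 1. The following are equivalent: (a) there exists a homogeneous polynomial F ∈ R such that I_c^{(m)} = I_c^m + ⟨F⟩ and I_c^{(m)} ≠ I_c^m (that is, the symbolic defect sdefect(I_c, m) equals 1); (b) c = 2 and m = 2. -/

import Mathlib

/-!
A polynomial lies in `P_S ^ m`, and hence in `I_c^{(m)}`, exactly when each of its monomials
does, and `x^b ∈ I_c^{(m)}` iff any `c` of the exponents of `b` add up to at least `m`.
Every monomial of `I_c` involves at least `n + 2 - c` variables, so `I_c^m` lives in degrees
`≥ m (n + 2 - c)`. If `I_c^{(m)} = I_c^m + (F)` with `F` homogeneous, comparing homogeneous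
components shows that `F` divides every monomial of `I_c^{(m)}` of smaller degree; then the
leading monomial of `F` divides the gcd of any two of them, and that gcd must lie in
`I_c^{(m)}` as well. Apart from the cases `c ≤ 1` or `m ≤ 1`, where `I_c^{(m)} = I_c^m`, and
`(c, m) = (2, 2)`, two monomials of the form `x_s ∏_{i ∉ L} x_i^{m-1}` with `|L| = c - 1`,
`s ∈ L`, violate this. For `c = m = 2` take `F = x_0 ⋯ x_n`: a monomial of `I_2^{(2)}` missing
the variable `x_i` is divisible by the square of `∏_{j ≠ i} x_j ∈ I_2`.
-/

open MvPolynomial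

/-- The ideal generated by the variables `x_i` for `i ∈ S`. -/
noncomputable def varIdeal (k : Type*) [Field k] (n : ℕ) (S : Finset (Fin (n + 1))) :
    Ideal (MvPolynomial (Fin (n + 1)) k) :=
  Ideal.span ((fun i => (X i : MvPolynomial (Fin (n + 1)) k)) '' ↑S)

/-- The monomial star configuration ideal `I_c = ⋂_{|S| = c} P_S`. -/
noncomputable def monStar (k : Type*) [Field k] (n c : ℕ) :
    Ideal (MvPolynomial (Fin (n + 1)) k) :=
  ⨅ (S : Finset (Fin (n + 1))) (_ : S.card = c), varIdeal k n S

/-- The `m`-th symbolic power `I_c^{(m)} = ⋂_{|S| = c} (P_S)^m`. -/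
noncomputable def monStarSymb (k : Type*) [Field k] (n c m : ℕ) :
    Ideal (MvPolynomial (Fin (n + 1)) k) :=
  ⨅ (S : Finset (Fin (n + 1))) (_ : S.card = c), (varIdeal k n S) ^ m

theorem Finsupp.sum_apply_add_single_of_mem {σ M : Type*} [AddCommMonoid M] [DecidableEq σ]
    {S : Finset σ} {i : σ} (hi : i ∈ S) (a : σ →₀ M) (r : M) :
    ∑ j ∈ S, (a + Finsupp.single i r) j = ∑ j ∈ S, a j + r := by
  simp [Finset.sum_add_distrib, Finsupp.single_apply, hi]

namespace MvPolynomial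

variable {σ R : Type*} [CommSemiring R]

theorem mem_of_forall_monomial_one_mem {J : Ideal (MvPolynomial σ R)} {f : MvPolynomial σ R}
    (h : ∀ b ∈ f.support, monomial b 1 ∈ J) : f ∈ J := by
  rw [f.as_sum]
  refine J.sum_mem fun b hb => ?_
  simpa [C_mul_monomial] using J.mul_mem_left (C (f.coeff b)) (h b hb)

theorem monomial_mem_of_le {J : Ideal (MvPolynomial σ R)} {a b : σ →₀ ℕ}
    (ha : monomial a 1 ∈ J) (hab : a ≤ b) (u : R) : monomial b u ∈ J := by
  rw [← add_tsub_cancel_of_le hab, ← one_mul u, ← monomial_mul]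
  exact J.mul_mem_right _ ha

theorem monomial_mem_span_X_image_pow {S : Finset σ} {d : ℕ} {a : σ →₀ ℕ}
    (h : d ≤ ∑ i ∈ S, a i) : monomial a (1 : R) ∈ Ideal.span (X '' (S : Set σ)) ^ d := by
  classical
  induction d generalizing a with
  | zero => simp
  | succ d ih =>
    obtain ⟨i, hiS, hai⟩ := Finset.exists_ne_zero_of_sum_ne_zero (by omega : ∑ i ∈ S, a i ≠ 0)
    obtain ⟨a', rfl⟩ : ∃ a', a = a' + Finsupp.single i 1 :=
      ⟨a - Finsupp.single i 1, (tsub_add_cancel_of_le (Finsupp.single_le_iff.mpr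
        (Nat.one_le_iff_ne_zero.mpr hai))).symm⟩
    rw [Finsupp.sum_apply_add_single_of_mem hiS] at h
    rw [← mul_one (1 : R), ← monomial_mul, pow_succ]
    exact Ideal.mul_mem_mul (ih (by omega)) (Ideal.subset_span ⟨i, hiS, rfl⟩)

theorem span_X_image_pow_le (S : Finset σ) (d : ℕ) :
    Ideal.span (X '' (S : Set σ)) ^ d ≤
      Ideal.span ((monomial · (1 : R)) '' {a | d ≤ ∑ i ∈ S, a i}) := by
  classical
  induction d with
  | zero =>
    rw [pow_zero, Ideal.one_eq_top, top_le_iff, Ideal.eq_top_iff_one]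
    exact Ideal.subset_span ⟨0, Nat.zero_le _, by simp⟩
  | succ d ih =>
    rw [pow_succ]
    refine (Ideal.mul_mono_left ih).trans ?_
    rw [Ideal.span_mul_span', Ideal.span_le]
    rintro _ ⟨_, ⟨a, ha, rfl⟩, _, ⟨i, hi, rfl⟩, rfl⟩
    refine Ideal.subset_span ⟨a + Finsupp.single i 1, ?_, ?_⟩
    · show d + 1 ≤ _
      rw [Finsupp.sum_apply_add_single_of_mem hi]
      exact Nat.succ_le_succ ha
    · simp [X, monomial_mul]

theorem mem_span_X_image_pow_iff {S : Finset σ} {d : ℕ} {f : MvPolynomial σ R} :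
    f ∈ Ideal.span (X '' (S : Set σ)) ^ d ↔ ∀ b ∈ f.support, d ≤ ∑ i ∈ S, b i := by
  refine ⟨fun hf b hb => ?_, fun h => mem_of_forall_monomial_one_mem fun b hb =>
    monomial_mem_span_X_image_pow (h b hb)⟩
  obtain ⟨a, ha, hab⟩ := mem_ideal_span_monomial_image.mp (span_X_image_pow_le S d hf) b hb
  exact ha.trans (Finset.sum_le_sum fun i _ => hab i)

section
attribute [local instance] gradedAlgebra

theorem homogeneousComponent_mul_of_isHomogeneous {F : MvPolynomial σ R} {d : ℕ}
    (hF : F.IsHomogeneous d) (g : MvPolynomial σ R) (D : ℕ) :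
    homogeneousComponent D (g * F) = if d ≤ D then homogeneousComponent (D - d) g * F else 0 := by
  rw [← decomposition.decompose'_apply, ← decomposition.decompose'_apply]
  exact DirectSum.coe_decompose_mul_of_right_mem _ D ((mem_homogeneousSubmodule d F).mpr hF)

end

theorem dvd_monomial_of_mem_sup_span_singleton {J : Ideal (MvPolynomial σ R)} {E : ℕ}
    (hJ : J ≤ idealOfVars σ R ^ E) {F : MvPolynomial σ R} {d : ℕ} (hF : F.IsHomogeneous d)
    {μ : σ →₀ ℕ} (hμ : μ.degree < E) (h : monomial μ 1 ∈ J ⊔ Ideal.span {F}) :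
    F ∣ monomial μ 1 := by
  obtain ⟨p, hp, q, hq, hpq⟩ := Submodule.mem_sup.mp h
  obtain ⟨g, rfl⟩ := Ideal.mem_span_singleton'.mp hq
  have hp0 : homogeneousComponent μ.degree p = 0 :=
    homogeneousComponent_eq_zero' _ _ fun b hb =>
      (hμ.trans_le ((mem_pow_idealOfVars_iff E p).mp (hJ hp) b hb)).ne'
  have key := congrArg (homogeneousComponent μ.degree) hpq
  rw [map_add, hp0, zero_add, homogeneousComponent_mul_of_isHomogeneous hF,
    homogeneousComponent_eq_self (isHomogeneous_monomial 1 rfl)] at key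
  split_ifs at key
  · exact ⟨_, key.symm.trans (mul_comm _ _)⟩
  · rw [← key]
    exact dvd_zero F

end MvPolynomial

theorem MonomialOrder.degree_le_of_dvd_monomial {σ R : Type*} [CommSemiring R] [NoZeroDivisors R]
    [Nontrivial R] (ord : MonomialOrder σ) {F : MvPolynomial σ R} {μ : σ →₀ ℕ}
    (h : F ∣ monomial μ 1) : ord.degree F ≤ μ := by
  classical
  obtain ⟨g, hg⟩ := h
  have hne : F * g ≠ 0 := hg ▸ monomial_eq_zero.not.mpr one_ne_zero
  have := ord.degree_mul (left_ne_zero_of_mul hne) (right_ne_zero_of_mul hne)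
  rw [← hg, ord.degree_monomial, if_neg one_ne_zero] at this
  exact this ▸ le_self_add

section StarConfiguration

variable {k : Type*} [Field k] {n : ℕ}

def IsSymbolicExponent (c m : ℕ) (μ : Fin (n + 1) →₀ ℕ) : Prop :=
  ∀ S : Finset (Fin (n + 1)), S.card = c → m ≤ ∑ i ∈ S, μ i

theorem IsSymbolicExponent.mono {c m : ℕ} {μ ν : Fin (n + 1) →₀ ℕ}
    (hμ : IsSymbolicExponent c m μ) (hle : μ ≤ ν) : IsSymbolicExponent c m ν :=
  fun S hS => (hμ S hS).trans (Finset.sum_le_sum fun i _ => hle i)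

theorem IsSymbolicExponent.le_degree {c : ℕ} {b : Fin (n + 1) →₀ ℕ}
    (hb : IsSymbolicExponent c 1 b) : n + 2 - c ≤ b.degree := by
  classical
  have hzeros : (Finset.univ \ b.support).card < c := by
    by_contra! hle
    obtain ⟨S, hS, hSc⟩ := Finset.exists_subset_card_eq hle
    have := hb S hSc
    rw [Finset.sum_eq_zero fun i hi => by simpa using (Finset.mem_sdiff.mp (hS hi)).2] at this
    omega
  have hsupp : b.support.card ≤ b.degree := by
    rw [Finsupp.degree_apply]
    simpa using Finset.card_nsmul_le_sum b.support b 1 fun i hi =>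
      Nat.one_le_iff_ne_zero.mpr (Finsupp.mem_support_iff.mp hi)
  rw [Finset.card_univ_sdiff, Fintype.card_fin] at hzeros
  omega

theorem mem_monStarSymb_iff {c m : ℕ} {f : MvPolynomial (Fin (n + 1)) k} :
    f ∈ monStarSymb k n c m ↔ ∀ b ∈ f.support, IsSymbolicExponent c m b := by
  simp only [monStarSymb, varIdeal, Submodule.mem_iInf, mem_span_X_image_pow_iff,
    IsSymbolicExponent]
  exact ⟨fun h b hb S hS => h S hS b hb, fun h S hS b hb => h b hb S hS⟩

theorem monomial_mem_monStarSymb_iff {c m : ℕ} {μ : Fin (n + 1) →₀ ℕ} {u : k} (hu : u ≠ 0) :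
    monomial μ u ∈ monStarSymb k n c m ↔ IsSymbolicExponent c m μ := by
  classical
  simp [mem_monStarSymb_iff, support_monomial, hu]

theorem monStar_eq_monStarSymb_one (c : ℕ) : monStar k n c = monStarSymb k n c 1 := by
  simp [monStar, monStarSymb]

theorem monStar_pow_le_monStarSymb (c m : ℕ) : monStar k n c ^ m ≤ monStarSymb k n c m :=
  le_iInf₂ fun S hS => Ideal.pow_right_mono (iInf₂_le S hS) m

theorem monStar_pow_le_idealOfVars_pow (c m : ℕ) :
    monStar k n c ^ m ≤ idealOfVars (Fin (n + 1)) k ^ (m * (n + 2 - c)) := by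
  rw [mul_comm, pow_mul]
  refine Ideal.pow_right_mono (fun f hf => ?_) m
  rw [monStar_eq_monStarSymb_one, mem_monStarSymb_iff] at hf
  exact (mem_pow_idealOfVars_iff _ f).mpr fun b hb => (hf b hb).le_degree

theorem isSymbolicExponent_inf_of_eq_pow_add_span {c m d : ℕ} {F : MvPolynomial (Fin (n + 1)) k}
    (hF : F.IsHomogeneous d) (heq : monStarSymb k n c m = monStar k n c ^ m + Ideal.span {F})
    {μ₁ μ₂ : Fin (n + 1) →₀ ℕ} (h₁ : IsSymbolicExponent c m μ₁) (h₂ : IsSymbolicExponent c m μ₂)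
    (hd₁ : μ₁.degree < m * (n + 2 - c)) (hd₂ : μ₂.degree < m * (n + 2 - c)) :
    IsSymbolicExponent c m (μ₁ ⊓ μ₂) := by
  have hdvd {μ} (hμ : IsSymbolicExponent c m μ) (hd : μ.degree < m * (n + 2 - c)) :
      F ∣ monomial μ 1 := by
    refine dvd_monomial_of_mem_sup_span_singleton (monStar_pow_le_idealOfVars_pow c m) hF hd ?_
    rw [← Ideal.add_eq_sup, ← heq]
    exact (monomial_mem_monStarSymb_iff one_ne_zero).mpr hμ
  have hF0 : F ≠ 0 := by
    rintro rfl
    exact monomial_eq_zero.not.mpr one_ne_zero (zero_dvd_iff.mp (hdvd h₁ hd₁))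
  have hFmem : F ∈ monStarSymb k n c m :=
    heq ▸ Ideal.mem_sup_right (Ideal.mem_span_singleton_self F)
  have hlead := mem_monStarSymb_iff.mp hFmem _ (MonomialOrder.lex.degree_mem_support hF0)
  exact hlead.mono (le_inf (MonomialOrder.lex.degree_le_of_dvd_monomial (hdvd h₁ hd₁))
    (MonomialOrder.lex.degree_le_of_dvd_monomial (hdvd h₂ hd₂)))

noncomputable def onesExponent : Fin (n + 1) →₀ ℕ := Finsupp.equivFunOnFinite.symm 1

@[simp]
theorem onesExponent_apply (i : Fin (n + 1)) : onesExponent i = 1 := rfl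

theorem monStarSymb_eq_pow_of_le_one {c m : ℕ} (h : c ≤ 1 ∨ m ≤ 1) :
    monStarSymb k n c m = monStar k n c ^ m := by
  rcases h with hc | hm
  · interval_cases c
    · simp [monStarSymb, monStar, Finset.card_eq_zero]
    · refine le_antisymm (fun f hf => mem_of_forall_monomial_one_mem fun b hb => ?_)
        (monStar_pow_le_monStarSymb 1 m)
      have hones : monomial onesExponent (1 : k) ∈ monStar k n 1 := by
        rw [monStar_eq_monStarSymb_one, monomial_mem_monStarSymb_iff one_ne_zero]
        intro S hS
        simp [hS]
      refine monomial_mem_of_le (by simpa [monomial_pow] using Ideal.pow_mem_pow hones m) ?_ 1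
      intro i
      simpa using mem_monStarSymb_iff.mp hf b hb {i} (Finset.card_singleton i)
  · interval_cases m
    · simp [monStarSymb]
    · rw [pow_one, monStar_eq_monStarSymb_one]

theorem monomial_onesExponent_sub_single_mem_monStar (i : Fin (n + 1)) :
    monomial (onesExponent - Finsupp.single i 1) (1 : k) ∈ monStar k n 2 := by
  classical
  rw [monStar_eq_monStarSymb_one, monomial_mem_monStarSymb_iff one_ne_zero]
  intro S hS
  obtain ⟨p, q, hpq, rfl⟩ := Finset.card_eq_two.mp hS
  rw [Finset.sum_pair hpq]
  simp only [Finsupp.tsub_apply, onesExponent_apply, Finsupp.single_apply]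
  split_ifs <;> omega

theorem monStarSymb_two_two_eq :
    monStarSymb k n 2 2 = monStar k n 2 ^ 2 + Ideal.span {monomial onesExponent 1} := by
  classical
  refine le_antisymm (fun f hf => mem_of_forall_monomial_one_mem fun b hb => ?_)
    (sup_le (monStar_pow_le_monStarSymb 2 2) ?_)
  · by_cases hz : ∀ j, b j ≠ 0
    · exact Ideal.mem_sup_right (monomial_mem_of_le (Ideal.mem_span_singleton_self _)
        (fun j => by simpa using Nat.one_le_iff_ne_zero.mpr (hz j)) 1)
    obtain ⟨i, hi⟩ := not_forall_not.mp hz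
    refine Ideal.mem_sup_left (monomial_mem_of_le
      (by simpa [monomial_pow] using
        Ideal.pow_mem_pow (monomial_onesExponent_sub_single_mem_monStar (k := k) i) 2)
      (fun j => ?_) 1)
    by_cases hij : i = j
    · simp [hij]
    · have hpair := mem_monStarSymb_iff.mp hf b hb {i, j} (Finset.card_pair hij)
      rw [Finset.sum_pair hij] at hpair
      simp only [Finsupp.coe_smul, Finsupp.coe_tsub, Pi.smul_apply, Pi.sub_apply,
        onesExponent_apply, Finsupp.single_eq_of_ne' hij, smul_eq_mul]
      omega
  · rw [Ideal.span_le, Set.singleton_subset_iff, SetLike.mem_coe,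
      monomial_mem_monStarSymb_iff one_ne_zero]
    intro S hS
    simp [hS]

theorem monomial_onesExponent_notMem_monStar_sq (hn : 2 ≤ n) :
    monomial onesExponent (1 : k) ∉ monStar k n 2 ^ 2 := by
  classical
  intro h
  have := (mem_pow_idealOfVars_iff _ _).mp (monStar_pow_le_idealOfVars_pow 2 2 h) onesExponent
    (by simp [support_monomial])
  simp [Finsupp.degree_eq_sum] at this
  omega

noncomputable def starWitness (m : ℕ) (L : Finset (Fin (n + 1))) (s : Fin (n + 1)) :
    Fin (n + 1) →₀ ℕ :=
  Finsupp.single s 1 + Finsupp.equivFunOnFinite.symm fun i => if i ∈ L then 0 else m - 1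

theorem starWitness_apply (m : ℕ) (L : Finset (Fin (n + 1))) (s i : Fin (n + 1)) :
    starWitness m L s i = (if s = i then 1 else 0) + if i ∈ L then 0 else m - 1 := by
  simp [starWitness, Finsupp.single_apply]

theorem sum_starWitness (m : ℕ) (L : Finset (Fin (n + 1))) (s : Fin (n + 1))
    (S : Finset (Fin (n + 1))) :
    ∑ i ∈ S, starWitness m L s i = (if s ∈ S then 1 else 0) + (S \ L).card * (m - 1) := by
  simp [starWitness_apply, Finset.sum_add_distrib, Finset.sum_ite, Finset.filter_notMem_eq_sdiff]

theorem isSymbolicExponent_starWitness {c m : ℕ} {L : Finset (Fin (n + 1))} {s : Fin (n + 1)}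
    (hm : 2 ≤ m) (hL : L.card + 1 = c) (hs : s ∈ L) :
    IsSymbolicExponent c m (starWitness m L s) := by
  intro S hS
  rw [sum_starWitness]
  have hsdiff := Finset.le_card_sdiff L S
  rcases (show 2 ≤ (S \ L).card ∨ (S \ L).card = 1 by omega) with h2 | h1
  · calc m ≤ 2 * (m - 1) := by omega
      _ ≤ (S \ L).card * (m - 1) := Nat.mul_le_mul_right _ h2
      _ ≤ _ := Nat.le_add_left _ _
  · have hinter := Finset.card_sdiff_add_card_inter S L
    have hLS : S ∩ L = L :=
      Finset.eq_of_subset_of_card_le Finset.inter_subset_right (by omega)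
    rw [if_pos (Finset.inter_subset_left (hLS ▸ hs)), h1]
    omega

theorem degree_starWitness_lt {c m : ℕ} {L : Finset (Fin (n + 1))} (s : Fin (n + 1))
    (hm : 1 ≤ m) (hL : L.card + 1 = c) (hcn : c ≤ n) :
    (starWitness m L s).degree < m * (n + 2 - c) := by
  rw [Finsupp.degree_eq_sum, sum_starWitness, if_pos (Finset.mem_univ s),
    Finset.card_univ_sdiff, Fintype.card_fin, show n + 1 - L.card = n + 2 - c by omega]
  obtain ⟨m, rfl⟩ := Nat.exists_eq_add_of_le' hm
  have : 2 ≤ n + 2 - c := by omega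
  simp only [add_tsub_cancel_right]
  nlinarith

theorem exists_starWitness_pair {c m : ℕ} (hc : 2 ≤ c) (hcn : c ≤ n) (hm : 2 ≤ m)
    (h22 : ¬(c = 2 ∧ m = 2)) :
    ∃ (L₁ : Finset (Fin (n + 1))) (s₁ : Fin (n + 1)) (L₂ : Finset (Fin (n + 1))) (s₂ : Fin (n + 1)),
      L₁.card + 1 = c ∧ s₁ ∈ L₁ ∧ L₂.card + 1 = c ∧ s₂ ∈ L₂ ∧
      ¬IsSymbolicExponent c m (starWitness m L₁ s₁ ⊓ starWitness m L₂ s₂) := by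
  classical
  obtain ⟨S₀, -, hS₀⟩ :=
    Finset.exists_subset_card_eq (s := (Finset.univ : Finset (Fin (n + 1)))) (n := c)
      (by simp; omega)
  rcases hc.eq_or_lt with rfl | hc3
  · obtain ⟨a, b, hab, rfl⟩ := Finset.card_eq_two.mp hS₀
    refine ⟨{a}, a, {b}, b, rfl, Finset.mem_singleton_self a, rfl, Finset.mem_singleton_self b,
      fun h => ?_⟩
    have hsum := h {a, b} hS₀
    rw [Finset.sum_pair hab] at hsum
    simp [Finsupp.inf_apply, starWitness_apply, hab, hab.symm] at hsum
    omega
  · obtain ⟨t, ht⟩ := Finset.card_pos.mp (by omega : 0 < S₀.card)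
    have hL : (S₀.erase t).card + 1 = c := by rw [Finset.card_erase_of_mem ht]; omega
    obtain ⟨s₁, hs₁, s₂, hs₂, hne⟩ := Finset.one_lt_card.mp (by omega : 1 < (S₀.erase t).card)
    refine ⟨S₀.erase t, s₁, S₀.erase t, s₂, hL, hs₁, hL, hs₂, fun h => ?_⟩
    have hbound : ∀ i ∈ S₀, (starWitness m (S₀.erase t) s₁ ⊓ starWitness m (S₀.erase t) s₂) i ≤
        if i = t then m - 1 else 0 := by
      intro i hi
      rw [Finsupp.inf_apply]
      split_ifs with hit
      · subst hit
        exact inf_le_left.trans (by simp [starWitness_apply, Finset.ne_of_mem_erase hs₁])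
      · rcases eq_or_ne s₁ i with rfl | hs₁i
        · exact inf_le_right.trans (by simp [starWitness_apply, hne.symm, hs₁])
        · exact inf_le_left.trans (by simp [starWitness_apply, hs₁i, hit, hi])
    have := (h S₀ hS₀).trans (Finset.sum_le_sum hbound)
    rw [Finset.sum_ite_eq' S₀ t, if_pos ht] at this
    omega

theorem monStarSymb_ne_pow_add_span {c m d : ℕ} (hc : 2 ≤ c) (hcn : c ≤ n) (hm : 2 ≤ m)
    (h22 : ¬(c = 2 ∧ m = 2)) {F : MvPolynomial (Fin (n + 1)) k} (hF : F.IsHomogeneous d) :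
    monStarSymb k n c m ≠ monStar k n c ^ m + Ideal.span {F} := by
  intro heq
  obtain ⟨L₁, s₁, L₂, s₂, hL₁, hs₁, hL₂, hs₂, hgcd⟩ := exists_starWitness_pair hc hcn hm h22
  exact hgcd (isSymbolicExponent_inf_of_eq_pow_add_span hF heq
    (isSymbolicExponent_starWitness hm hL₁ hs₁) (isSymbolicExponent_starWitness hm hL₂ hs₂)
    (degree_starWitness_lt s₁ (by omega) hL₁ hcn) (degree_starWitness_lt s₂ (by omega) hL₂ hcn))

end StarConfiguration

theorem symbolic_defect_one_iff_general (k : Type*) [Field k] (n c m : ℕ)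
    (hcn : c ≤ n) :
    ((∃ F : MvPolynomial (Fin (n + 1)) k, (∃ d, F.IsHomogeneous d) ∧
        monStarSymb k n c m = monStar k n c ^ m + Ideal.span {F} ∧
        monStarSymb k n c m ≠ monStar k n c ^ m) ↔ (c = 2 ∧ m = 2)) := by
  constructor
  · rintro ⟨F, ⟨d, hF⟩, heq, hne⟩
    by_contra h22
    have hc : 2 ≤ c := by
      by_contra! hc
      exact hne (monStarSymb_eq_pow_of_le_one (.inl (by omega)))
    have hm : 2 ≤ m := by
      by_contra! hm
      exact hne (monStarSymb_eq_pow_of_le_one (.inr (by omega)))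
    exact monStarSymb_ne_pow_add_span hc hcn hm h22 hF heq
  · rintro ⟨rfl, rfl⟩
    refine ⟨_, ⟨_, isHomogeneous_monomial 1 rfl⟩, monStarSymb_two_two_eq (k := k), fun h => ?_⟩
    apply monomial_onesExponent_notMem_monStar_sq (k := k) hcn
    rw [← h, monStarSymb_two_two_eq]
    exact Ideal.mem_sup_right (Ideal.mem_span_singleton_self _)

theorem symbolic_defect_one_iff (k : Type*) [Field k] (n c m : ℕ)
    (hn : 1 ≤ n) (hc : 1 ≤ c) (hcn : c ≤ n) (hm : 1 ≤ m) :
    ((∃ F : MvPolynomial (Fin (n + 1)) k, (∃ d, F.IsHomogeneous d) ∧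
        monStarSymb k n c m = monStar k n c ^ m + Ideal.span {F} ∧
        monStarSymb k n c m ≠ monStar k n c ^ m) ↔ (c = 2 ∧ m = 2)) :=
  symbolic_defect_one_iff_general k n c m hcn
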